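/- Every cograph is a perfect graph; in particular, the chromatic number of every cograph equals its clique number, and the same holds for every induced subgraph. -/

import Mathlib

open SimpleGraph

universe u

variable {V : Type u}

/-- The independence (stability) number of a graph. -/
noncomputable def indepNum (G : SimpleGraph V) : ℕ :=
  sSup {n | ∃ s : Finset V, s.card = n ∧ ∀ x ∈ s, ∀ y ∈ s, x ≠ y → ¬ G.Adj x y}

/-- A walk is induced: any edge of `G` between vertices of the walk is an edge of the walk. -/
def IsInducedWalk (G : SimpleGraph V) {u v : V} (p : G.Walk u v) : Prop :=
  ∀ x ∈ p.support, ∀ y ∈ p.support, G.Adj x y → p.toSubgraph.Adj x y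

/-- An induced path. -/
def IsInducedPath (G : SimpleGraph V) {u v : V} (p : G.Walk u v) : Prop :=
  p.IsPath ∧ IsInducedWalk G p

/-- An odd hole: an induced cycle of odd length at least 5. -/
def HasOddHole (G : SimpleGraph V) : Prop :=
  ∃ (v : V) (p : G.Walk v v), p.IsCycle ∧ IsInducedWalk G p ∧ Odd p.length ∧ 5 ≤ p.length

/-- A cograph: no induced path on four vertices. -/
def IsCograph (G : SimpleGraph V) : Prop :=
  ¬ ∃ a b c d : V, a ≠ c ∧ a ≠ d ∧ b ≠ d ∧
    G.Adj a b ∧ G.Adj b c ∧ G.Adj c d ∧ ¬ G.Adj a c ∧ ¬ G.Adj a d ∧ ¬ G.Adj b d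

/-- A levelling `(L 0, …, L k)` in `G`. -/
def IsLevelling (G : SimpleGraph V) (k : ℕ) (L : ℕ → Set V) : Prop :=
  (∀ i j, i ≤ k → j ≤ k → i ≠ j → Disjoint (L i) (L j)) ∧
  (∃ x, L 0 = {x}) ∧
  (∀ i, 1 ≤ i → i ≤ k → ∀ v ∈ L i,
     (∃ u ∈ L (i - 1), G.Adj u v) ∧ (∀ h, h + 1 < i → ∀ u ∈ L h, ¬ G.Adj u v))

/-- The interior (internal vertices) of a walk is contained in `S`. -/
def InteriorIn (G : SimpleGraph V) {u v : V} (p : G.Walk u v) (S : Set V) : Prop :=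
  ∀ x ∈ p.support, x ≠ u → x ≠ v → x ∈ S

/-- The union `L 0 ∪ ⋯ ∪ L (k-1)`. -/
def lowerLevels (L : ℕ → Set V) (k : ℕ) : Set V := ⋃ i ∈ Finset.range k, L i

/-- There is an odd induced path between `u` and `v` with interior in the lower levels. -/
def OddConn (G : SimpleGraph V) (L : ℕ → Set V) (k : ℕ) (u v : V) : Prop :=
  u ≠ v ∧ ∃ p : G.Walk u v, IsInducedPath G p ∧ Odd p.length ∧
    InteriorIn G p (lowerLevels L k)

/-- `w ∈ L (i+1)` is a dependent of `u ∈ L i`: `u` is its only parent. -/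
def IsDependent (G : SimpleGraph V) (L : ℕ → Set V) (i : ℕ) (u w : V) : Prop :=
  w ∈ L (i + 1) ∧ G.Adj u w ∧ ∀ x ∈ L i, G.Adj x w → x = u


/-! Induction on the number of vertices: remove a maximal independent set `S`, colour the rest
by induction and give `S` one new colour. This costs no more than `ω(G)` colours because in a
cograph removing `S` lowers the clique number: every clique `K` avoiding `S` has a common
neighbour in `S`. Indeed, add the vertices of `K` one at a time; if `s ∈ S` sees the clique so far
but not the new vertex `w`, and the neighbour `t ∈ S` of `w` misses some `v` of the clique so far,
then `s - v - w - t` is an induced `P₄`. -/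

section CographColoring

variable {G : SimpleGraph V}

lemma IsCograph.induce (h : IsCograph G) (X : Set V) : IsCograph (G.induce X) := by
  rintro ⟨a, b, c, d, hac, had, hbd, hab, hbc, hcd, nac, nad, nbd⟩
  exact h ⟨a, b, c, d, Subtype.coe_injective.ne hac, Subtype.coe_injective.ne had,
    Subtype.coe_injective.ne hbd, hab, hbc, hcd, nac, nad, nbd⟩

lemma exists_adj_of_maximal_isIndepSet {S : Set V} (hS : Maximal G.IsIndepSet S) {v : V}
    (hv : v ∉ S) : ∃ u ∈ S, G.Adj u v := by
  by_contra! hno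
  have hins : G.IsIndepSet (insert v S) :=
    hS.prop.insert fun u hu _ => ⟨fun h => hno u hu h.symm, hno u hu⟩
  exact hv (hS.eq_of_subset hins (Set.subset_insert v S) ▸ Set.mem_insert v S)

lemma IsCograph.exists_forall_adj_of_isClique (hG : IsCograph G) {S : Set V}
    (hS : Maximal G.IsIndepSet S) (hS₀ : S.Nonempty) {K : Finset V}
    (hK : G.IsClique (K : Set V)) (hKS : ∀ v ∈ K, v ∉ S) :
    ∃ s ∈ S, ∀ v ∈ K, G.Adj s v := by
  classical
  induction K using Finset.induction_on with
  | empty =>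
    obtain ⟨s, hs⟩ := hS₀
    exact ⟨s, hs, by simp⟩
  | insert w K hwK ih =>
    rw [Finset.coe_insert, isClique_insert] at hK
    have hwS := hKS w (Finset.mem_insert_self w K)
    obtain ⟨s, hsS, hsK⟩ := ih hK.1 fun v hv => hKS v (Finset.mem_insert_of_mem hv)
    by_cases hsw : G.Adj s w
    · exact ⟨s, hsS, by simpa [hsw] using hsK⟩
    obtain ⟨t, htS, htw⟩ := exists_adj_of_maximal_isIndepSet hS hwS
    by_cases htK : ∀ v ∈ K, G.Adj t v
    · exact ⟨t, htS, by simpa [htw] using htK⟩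
    push Not at htK
    obtain ⟨v, hvK, htv⟩ := htK
    have hvS := hKS v (Finset.mem_insert_of_mem hvK)
    have hst : s ≠ t := by rintro rfl; exact hsw htw
    have hvw : v ≠ w := by rintro rfl; exact hwK hvK
    exact (hG ⟨s, v, w, t, (hwS <| · ▸ hsS), hst, (hvS <| · ▸ htS),
      hsK v hvK, (hK.2 v hvK hvw.symm).symm, htw.symm, hsw, hS.prop hsS htS hst,
      fun h => htv h.symm⟩).elim

lemma SimpleGraph.IsIndepSet.colorable_succ {S : Set V} (hS : G.IsIndepSet S) {n : ℕ}
    (hc : (G.induce Sᶜ).Colorable n) : G.Colorable (n + 1) := by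
  classical
  obtain ⟨C⟩ := hc
  refine ⟨Coloring.mk (fun v => if h : v ∈ S then Fin.last n else (C ⟨v, h⟩).castSucc) ?_⟩
  intro v w hvw
  by_cases hv : v ∈ S <;> by_cases hw : w ∈ S <;> simp only [hv, hw, dite_true, dite_false]
  · exact absurd hvw (hS hv hw hvw.ne)
  · exact (Fin.castSucc_lt_last _).ne'
  · exact (Fin.castSucc_lt_last _).ne
  · exact fun h => C.valid (v := ⟨v, hv⟩) (w := ⟨w, hw⟩) hvw (Fin.castSucc_injective _ h)

lemma IsCograph.cliqueNum_induce_compl_lt [Finite V] (hG : IsCograph G) {S : Set V}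
    (hS : Maximal G.IsIndepSet S) (hS₀ : S.Nonempty) :
    (G.induce Sᶜ).cliqueNum < G.cliqueNum := by
  classical
  obtain ⟨t, ht⟩ := (G.induce Sᶜ).exists_isNClique_cliqueNum
  rw [isNClique_induce_iff] at ht
  set K := t.map (Function.Embedding.subtype _)
  have hKS : ∀ v ∈ K, v ∉ S := by
    simp only [K, Finset.mem_map, Function.Embedding.coe_subtype]
    rintro _ ⟨v, -, rfl⟩
    exact v.2
  obtain ⟨s, hsS, hsK⟩ := hG.exists_forall_adj_of_isClique hS hS₀ ht.isClique hKS
  have hclique : G.IsClique (insert s K : Finset V) := by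
    rw [Finset.coe_insert, isClique_insert]
    exact ⟨ht.isClique, fun v hv _ => hsK v hv⟩
  calc (G.induce Sᶜ).cliqueNum = K.card := ht.card_eq.symm
    _ < (insert s K).card := by
      rw [Finset.card_insert_of_notMem fun h => hKS s h hsS]; omega
    _ ≤ G.cliqueNum := hclique.card_le_cliqueNum

theorem IsCograph.colorable_cliqueNum [Finite V] (hG : IsCograph G) :
    G.Colorable G.cliqueNum := by
  induction hn : Nat.card V using Nat.strong_induction_on generalizing V with
  | _ n ih =>
  cases isEmpty_or_nonempty V
  · exact .of_isEmpty _
  obtain ⟨v⟩ := ‹Nonempty V›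
  obtain ⟨S, hvS, hS⟩ :=
    Finite.exists_le_maximal (p := G.IsIndepSet) (Set.pairwise_singleton v _)
  have hcard : Nat.card (Sᶜ : Set V) < n :=
    hn ▸ Finite.card_subtype_lt (x := v) (by simpa using hvS rfl)
  exact (hS.prop.colorable_succ (ih _ hcard (hG.induce Sᶜ) rfl)).mono
    (hG.cliqueNum_induce_compl_lt hS ⟨v, hvS rfl⟩)

end CographColoring

theorem stmt2 [Fintype V] (G : SimpleGraph V) (h : IsCograph G) (X : Set V) :
    (G.induce X).chromaticNumber = ((G.induce X).cliqueNum : ℕ∞) :=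
  le_antisymm (h.induce X).colorable_cliqueNum.chromaticNumber_le cliqueNum_le_chromaticNumber
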